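/- For every natural number n, the order-n dragon curve dragonF n is a prefix of the infinite dragon curve: List.take (2^n - 1) (the stream dragon as a sequence) = dragonF n, where dragon : Stream' Turn is the unique stream satisfying dragon = lr ▷' dragon with ▷' the stream-interleaving that alternates elements of lr and dragon (i.e. dragon.get (2k) = lr.get k and dragon.get (2k+1) = dragon.get k for all k). -/

import Mathlib

inductive Turn : Type
  | L
  | R
deriving DecidableEq

open Turn

def inv : Turn → Turn
  | L => R
  | R => L

def interleave {α : Type*} : Stream' α → List α → List α
  | zs, [] => [zs.head]
  | zs, y :: ys => zs.head :: y :: interleave zs.tail ys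

infixr:67 " ▷ " => interleave

def lr : Stream' Turn := fun n => if n % 2 = 0 then L else R

def rl : Stream' Turn := fun n => if n % 2 = 0 then R else L

def dragonU : ℕ → List Turn
  | 0 => []
  | n + 1 => dragonU n ++ [L] ++ List.map inv (List.reverse (dragonU n))

def dragonF : ℕ → List Turn
  | 0 => []
  | n + 1 => lr ▷ dragonF n

lemma tail_drop' {α : Type*} (s : Stream' α) (j : ℕ) :
    (Stream'.drop j s).tail = Stream'.drop (j+1) s := by
  funext i
  simp [Stream'.drop, Stream'.tail, Stream'.get]
  ring_nf

lemma take_drop_eq_map_range' {α : Type*} (s : Stream' α) :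
    ∀ n j, Stream'.take n (Stream'.drop j s) = (List.range' j n).map s.get := by
  intro n
  induction n with
  | zero => intro j; rfl
  | succ n ih =>
    intro j
    rw [Stream'.take_succ, tail_drop', ih, List.range'_succ]
    simp [Stream'.head, Stream'.drop, Stream'.get]

lemma take_eq_map_range' {α : Type*} (s : Stream' α) (n : ℕ) :
    Stream'.take n s = (List.range' 0 n).map s.get := by
  have := take_drop_eq_map_range' s n 0
  simpa [Stream'.drop] using this

theorem dragonF_prefix_of_dragon (dragon : Stream' Turn)
    (heven : ∀ k : ℕ, dragon.get (2 * k) = lr.get k)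
    (hodd : ∀ k : ℕ, dragon.get (2 * k + 1) = dragon.get k) :
    ∀ n : ℕ, Stream'.take (2 ^ n - 1) dragon = dragonF n := by
  have key : ∀ m j, (Stream'.drop j lr) ▷ ((List.range' j m).map dragon.get)
      = (List.range' (2*j) (2*m+1)).map dragon.get := by
    intro m
    induction m with
    | zero =>
      intro j
      simp only [interleave, Stream'.head, Stream'.drop, Stream'.get, List.map_nil, List.range'_zero, Nat.mul_zero, List.range'_succ, List.map_cons]
      rw [show (0:ℕ)+j = j from by omega]
      exact congrArg (fun x => [x]) (heven j).symm
    | succ m ih =>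
      intro j
      rw [List.range'_succ, List.map_cons]
      show (Stream'.drop j lr).head :: dragon.get j ::
        ((Stream'.drop j lr).tail ▷ (List.range' (j+1) m).map dragon.get) = _
      rw [tail_drop', ih (j+1)]
      have h1 : (Stream'.drop j lr).head = dragon.get (2*j) := by
        rw [heven j]
        simp [Stream'.head, Stream'.drop, Stream'.get]
      have h2 : dragon.get j = dragon.get (2*j+1) := (hodd j).symm
      rw [h1, h2]
      have : List.range' (2*j) (2*(m+1)+1) = (2*j) :: (2*j+1) :: List.range' (2*(j+1)) (2*m+1) := by
        rw [show 2*(m+1)+1 = (2*m+1)+1+1 by ring, List.range'_succ, List.range'_succ]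
        ring_nf
      rw [this]
      simp
  intro n
  induction n with
  | zero => rfl
  | succ n ih =>
    have h2n : 1 ≤ 2 ^ n := Nat.one_le_two_pow
    have harith : 2 ^ (n+1) - 1 = 2 * (2^n - 1) + 1 := by
      have : 2 ^ (n+1) = 2 * 2 ^ n := by ring
      omega
    rw [harith, show dragonF (n+1) = lr ▷ dragonF n from rfl, ← ih]
    rw [take_eq_map_range' dragon, take_eq_map_range' dragon]
    have := key (2^n - 1) 0
    simpa [Stream'.drop, interleave] using this.symm
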